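/- Let X, X', Y, Z be finite-valued random variables such that I(Y; Z | (X, X')) = 0. Then I(Y; Z) ≥ I(Y; (X, X')) - I(X; X' | Z) - I(X; Y | X') - I(X'; Y | X). -/

import Mathlib

/-
Discrete probability setup: a finite sample space `Ω` with weight function `p`
(nonnegative, summing to 1).  Random variables are functions out of `Ω` into
nonempty finite sets.  `pr p X x = P(X = x)`, `ent` is Shannon entropy
(natural log, with `0 · log 0 = 0` since `Real.log 0 = 0`), `mi` is mutual
information `I(X;Y) = H(X) + H(Y) - H(X,Y)`, and `cmi` is conditional mutual
information `I(X;Y|W) = ∑ w, P(W=w) · I(X;Y | W=w)` computed with respect to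
the conditional distribution `condp p W w` (terms with `P(W=w)=0` vanish).
`klDivF` is the discrete Kullback–Leibler divergence with the convention that
terms with `p s = 0` contribute `0` (indeed `0 * log 0 = 0` in Lean).
-/

open scoped Classical
open Finset

noncomputable def pr {Ω α : Type*} [Fintype Ω] (p : Ω → ℝ) (X : Ω → α) (x : α) : ℝ :=
  ∑ ω, if X ω = x then p ω else 0

noncomputable def ent {Ω α : Type*} [Fintype Ω] [Fintype α] (p : Ω → ℝ) (X : Ω → α) : ℝ :=
  -∑ x, pr p X x * Real.log (pr p X x)

noncomputable def mi {Ω α β : Type*} [Fintype Ω] [Fintype α] [Fintype β]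
    (p : Ω → ℝ) (X : Ω → α) (Y : Ω → β) : ℝ :=
  ent p X + ent p Y - ent p (fun ω => (X ω, Y ω))

noncomputable def condp {Ω γ : Type*} [Fintype Ω] (p : Ω → ℝ) (W : Ω → γ) (w : γ) : Ω → ℝ :=
  fun ω => if W ω = w then p ω / pr p W w else 0

noncomputable def cmi {Ω α β γ : Type*} [Fintype Ω] [Fintype α] [Fintype β] [Fintype γ]
    (p : Ω → ℝ) (X : Ω → α) (Y : Ω → β) (W : Ω → γ) : ℝ :=
  ∑ w, pr p W w * mi (condp p W w) X Y

noncomputable def klDivF {S : Type*} [Fintype S] (p q : S → ℝ) : ℝ :=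
  ∑ s, p s * Real.log (p s / q s)

section Aux

variable {Ω α β γ : Type*} [Fintype Ω]

lemma pr_nonneg (p : Ω → ℝ) (hp : ∀ ω, 0 ≤ p ω) (X : Ω → α) (x : α) : 0 ≤ pr p X x := by
  unfold pr
  exact Finset.sum_nonneg fun ω _ => by split_ifs with hh; exacts [hp ω, le_rfl]

lemma sum_pr [Fintype α] (p : Ω → ℝ) (X : Ω → α) : ∑ x, pr p X x = ∑ ω, p ω := by
  unfold pr
  rw [Finset.sum_comm]
  refine Finset.sum_congr rfl fun ω _ => ?_
  simp

lemma pr_marg_right [Fintype α] (p : Ω → ℝ) (A : Ω → α) (W : Ω → γ) (w : γ) :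
    ∑ a, pr p (fun ω => (A ω, W ω)) (a, w) = pr p W w := by
  unfold pr
  rw [Finset.sum_comm]
  refine Finset.sum_congr rfl fun ω _ => ?_
  by_cases hw : W ω = w <;> simp [hw, Prod.ext_iff]

lemma pr_marg_left [Fintype β] (p : Ω → ℝ) (A : Ω → α) (B : Ω → β) (a : α) :
    ∑ b, pr p (fun ω => (A ω, B ω)) (a, b) = pr p A a := by
  unfold pr
  rw [Finset.sum_comm]
  refine Finset.sum_congr rfl fun ω _ => ?_
  by_cases ha : A ω = a <;> simp [ha, Prod.ext_iff]

lemma ent_comp [Fintype α] [Fintype β] (p : Ω → ℝ) (X : Ω → α) (g : α → β)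
    (hg : Function.Injective g) : ent p (fun ω => g (X ω)) = ent p X := by
  have hpr : ∀ x, pr p (fun ω => g (X ω)) (g x) = pr p X x := by
    intro x; unfold pr
    refine Finset.sum_congr rfl fun ω _ => ?_
    simp [hg.eq_iff]
  have hzero : ∀ y : β, y ∉ Finset.image g Finset.univ → pr p (fun ω => g (X ω)) y = 0 := by
    intro y hy
    unfold pr
    refine Finset.sum_eq_zero fun ω _ => ?_
    have hne : g (X ω) ≠ y := fun hh =>
      hy (hh ▸ Finset.mem_image_of_mem g (Finset.mem_univ (X ω)))
    simp [hne]
  unfold ent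
  rw [← Finset.sum_subset (Finset.subset_univ (Finset.image g Finset.univ))
      (fun y _ hy => by simp [hzero y hy]),
    Finset.sum_image (fun a _ b _ hh => hg hh)]
  simp [hpr]

lemma condp_nonneg (p : Ω → ℝ) (hp : ∀ ω, 0 ≤ p ω) (W : Ω → γ) (w : γ) :
    ∀ ω, 0 ≤ condp p W w ω := by
  intro ω; unfold condp; split_ifs with hh
  · exact div_nonneg (hp ω) (pr_nonneg p hp W w)
  · exact le_rfl

lemma sum_condp (p : Ω → ℝ) (W : Ω → γ) (w : γ) (hw : pr p W w ≠ 0) :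
    ∑ ω, condp p W w ω = 1 := by
  unfold condp
  have key : ∀ ω, (if W ω = w then p ω / pr p W w else 0)
      = (if W ω = w then p ω else 0) / pr p W w := by
    intro ω; split_ifs <;> simp
  simp_rw [key, ← Finset.sum_div]
  rw [show (∑ ω, if W ω = w then p ω else 0) = pr p W w from rfl, div_self hw]

lemma pr_condp [Fintype α] [Fintype γ] (p : Ω → ℝ) (W : Ω → γ) (w : γ) (A : Ω → α) (a : α) :
    pr (condp p W w) A a = pr p (fun ω => (A ω, W ω)) (a, w) / pr p W w := by
  unfold pr condp
  rw [Finset.sum_div]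
  refine Finset.sum_congr rfl fun ω _ => ?_
  by_cases h1 : A ω = a <;> by_cases h2 : W ω = w <;> simp [h1, h2, Prod.ext_iff, pr]

lemma sum_ent_condp [Fintype α] [Fintype γ] (p : Ω → ℝ) (hp : ∀ ω, 0 ≤ p ω)
    (A : Ω → α) (W : Ω → γ) :
    ∑ w, pr p W w * ent (condp p W w) A
      = ent p (fun ω => (A ω, W ω)) - ent p W := by
  have key : ∀ w, pr p W w * ent (condp p W w) A
      = (-∑ a, pr p (fun ω => (A ω, W ω)) (a, w)
            * Real.log (pr p (fun ω => (A ω, W ω)) (a, w)))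
        + pr p W w * Real.log (pr p W w) := by
    intro w
    by_cases hw : pr p W w = 0
    · have hz : ∀ a, pr p (fun ω => (A ω, W ω)) (a, w) = 0 := by
        have h1 : ∑ a, pr p (fun ω => (A ω, W ω)) (a, w) = 0 :=
          (pr_marg_right p A W w).trans hw
        intro a
        exact (Finset.sum_eq_zero_iff_of_nonneg
          (fun a _ => pr_nonneg p hp _ _)).1 h1 a (Finset.mem_univ a)
      simp [hw, hz]
    · unfold ent
      simp_rw [pr_condp p W w A]
      have step : ∀ a, pr p W w * (pr p (fun ω => (A ω, W ω)) (a, w) / pr p W w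
            * Real.log (pr p (fun ω => (A ω, W ω)) (a, w) / pr p W w))
          = pr p (fun ω => (A ω, W ω)) (a, w)
              * Real.log (pr p (fun ω => (A ω, W ω)) (a, w))
            - pr p (fun ω => (A ω, W ω)) (a, w) * Real.log (pr p W w) := by
        intro a
        by_cases hj : pr p (fun ω => (A ω, W ω)) (a, w) = 0
        · simp [hj]
        · rw [Real.log_div hj hw]
          field_simp
      rw [mul_neg, Finset.mul_sum]
      simp_rw [step]
      rw [Finset.sum_sub_distrib, ← Finset.sum_mul, pr_marg_right]
      ring
  calc (∑ w, pr p W w * ent (condp p W w) A)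
      = ∑ w, ((-∑ a, pr p (fun ω => (A ω, W ω)) (a, w)
            * Real.log (pr p (fun ω => (A ω, W ω)) (a, w)))
        + pr p W w * Real.log (pr p W w)) := Finset.sum_congr rfl fun w _ => key w
    _ = ent p (fun ω => (A ω, W ω)) - ent p W := by
        rw [Finset.sum_add_distrib]
        have flip : (∑ w, -(∑ a, pr p (fun ω => (A ω, W ω)) (a, w)
              * Real.log (pr p (fun ω => (A ω, W ω)) (a, w))))
            = -∑ a, ∑ w, pr p (fun ω => (A ω, W ω)) (a, w)
              * Real.log (pr p (fun ω => (A ω, W ω)) (a, w)) := by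
          rw [Finset.sum_neg_distrib, Finset.sum_comm]
        rw [flip]
        unfold ent
        rw [Fintype.sum_prod_type]
        ring

lemma cmi_eq [Fintype α] [Fintype β] [Fintype γ] (p : Ω → ℝ) (hp : ∀ ω, 0 ≤ p ω)
    (A : Ω → α) (B : Ω → β) (W : Ω → γ) :
    cmi p A B W = ent p (fun ω => (A ω, W ω)) + ent p (fun ω => (B ω, W ω))
      - ent p (fun ω => ((A ω, B ω), W ω)) - ent p W := by
  unfold cmi mi
  simp_rw [mul_sub, mul_add]
  rw [Finset.sum_sub_distrib, Finset.sum_add_distrib, sum_ent_condp p hp A W,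
      sum_ent_condp p hp B W, sum_ent_condp p hp (fun ω => (A ω, B ω)) W]
  ring

lemma gibbs {S : Type*} [Fintype S] (u v : S → ℝ) (hu : ∀ s, 0 ≤ u s) (hv : ∀ s, 0 ≤ v s)
    (hu1 : ∑ s, u s = 1) (hv1 : ∑ s, v s ≤ 1) (habs : ∀ s, v s = 0 → u s = 0) :
    0 ≤ ∑ s, u s * Real.log (u s / v s) := by
  have hterm : ∀ s, u s - v s ≤ u s * Real.log (u s / v s) := by
    intro s
    rcases eq_or_lt_of_le (hu s) with hh | hh
    · rw [← hh]; simp; linarith [hv s]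
    · have hv' : 0 < v s := lt_of_le_of_ne (hv s) fun e => by
        have h0 := habs s e.symm
        exact absurd h0.symm (ne_of_lt hh)
      have h1 : Real.log (v s / u s) ≤ v s / u s - 1 :=
        Real.log_le_sub_one_of_pos (by positivity)
      have h2 : Real.log (u s / v s) = - Real.log (v s / u s) := by
        rw [← Real.log_inv]; congr 1; rw [inv_div]
      have h3 : 1 - v s / u s ≤ Real.log (u s / v s) := by rw [h2]; linarith
      have h4 : u s * (1 - v s / u s) ≤ u s * Real.log (u s / v s) :=
        mul_le_mul_of_nonneg_left h3 hh.le
      have h5 : u s * (1 - v s / u s) = u s - v s := by field_simp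
      linarith
  have hsum2 : ∑ s, (u s - v s) ≤ ∑ s, u s * Real.log (u s / v s) :=
    Finset.sum_le_sum fun s _ => hterm s
  rw [Finset.sum_sub_distrib, hu1] at hsum2
  linarith

set_option maxHeartbeats 1000000 in
lemma mi_nonneg [Fintype α] [Fintype β] (q : Ω → ℝ) (hq : ∀ ω, 0 ≤ q ω)
    (hq1 : ∑ ω, q ω = 1) (A : Ω → α) (B : Ω → β) : 0 ≤ mi q A B := by
  have hule_a : ∀ x : α × β, pr q (fun ω => (A ω, B ω)) x ≤ pr q A x.1 := by
    rintro ⟨a, b⟩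
    rw [← pr_marg_left q A B a]
    exact Finset.single_le_sum (f := fun b' => pr q (fun ω => (A ω, B ω)) (a, b'))
      (fun b' _ => pr_nonneg q hq _ _) (Finset.mem_univ b)
  have hule_b : ∀ x : α × β, pr q (fun ω => (A ω, B ω)) x ≤ pr q B x.2 := by
    rintro ⟨a, b⟩
    rw [← pr_marg_right q A B b]
    exact Finset.single_le_sum (f := fun a' => pr q (fun ω => (A ω, B ω)) (a', b))
      (fun a' _ => pr_nonneg q hq _ _) (Finset.mem_univ a)
  have main : (∑ x : α × β, pr q (fun ω => (A ω, B ω)) x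
        * Real.log (pr q (fun ω => (A ω, B ω)) x / (pr q A x.1 * pr q B x.2)))
      = (∑ x : α × β, pr q (fun ω => (A ω, B ω)) x
            * Real.log (pr q (fun ω => (A ω, B ω)) x))
        - (∑ x : α × β, pr q (fun ω => (A ω, B ω)) x * Real.log (pr q A x.1))
        - (∑ x : α × β, pr q (fun ω => (A ω, B ω)) x * Real.log (pr q B x.2)) := by
    rw [← Finset.sum_sub_distrib, ← Finset.sum_sub_distrib]
    refine Finset.sum_congr rfl fun x _ => ?_
    by_cases hx : pr q (fun ω => (A ω, B ω)) x = 0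
    · simp [hx]
    · have ha : pr q A x.1 ≠ 0 := fun e =>
        hx (le_antisymm (e ▸ hule_a x) (pr_nonneg q hq _ _))
      have hb : pr q B x.2 ≠ 0 := fun e =>
        hx (le_antisymm (e ▸ hule_b x) (pr_nonneg q hq _ _))
      rw [Real.log_div hx (mul_ne_zero ha hb), Real.log_mul ha hb]
      ring
  have eA : ∑ x : α × β, pr q (fun ω => (A ω, B ω)) x * Real.log (pr q A x.1)
      = ∑ a, pr q A a * Real.log (pr q A a) := by
    rw [Fintype.sum_prod_type]
    refine Finset.sum_congr rfl fun a _ => ?_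
    show (∑ y : β, pr q (fun ω => (A ω, B ω)) (a, y) * Real.log (pr q A a)) = _
    rw [← Finset.sum_mul, pr_marg_left]
  have eB : ∑ x : α × β, pr q (fun ω => (A ω, B ω)) x * Real.log (pr q B x.2)
      = ∑ b, pr q B b * Real.log (pr q B b) := by
    rw [Fintype.sum_prod_type_right]
    refine Finset.sum_congr rfl fun b _ => ?_
    show (∑ y : α, pr q (fun ω => (A ω, B ω)) (y, b) * Real.log (pr q B b)) = _
    rw [← Finset.sum_mul, pr_marg_right]
  have hmi : mi q A B = ∑ x : α × β, pr q (fun ω => (A ω, B ω)) x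
      * Real.log (pr q (fun ω => (A ω, B ω)) x / (pr q A x.1 * pr q B x.2)) := by
    rw [main, eA, eB]
    unfold mi ent
    ring
  rw [hmi]
  refine gibbs (fun x : α × β => pr q (fun ω => (A ω, B ω)) x) (fun x => pr q A x.1 * pr q B x.2) (fun x => pr_nonneg q hq _ _)
    (fun x => mul_nonneg (pr_nonneg q hq _ _) (pr_nonneg q hq _ _))
    ((sum_pr q _).trans hq1) ?_ ?_
  · have hv : (∑ x : α × β, pr q A x.1 * pr q B x.2)
        = (∑ a, pr q A a) * (∑ b, pr q B b) := by
      rw [Finset.sum_mul_sum, Fintype.sum_prod_type]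
    rw [hv, sum_pr, sum_pr, hq1, one_mul]
  · intro x hx
    rcases mul_eq_zero.1 hx with e | e
    · exact le_antisymm (e ▸ hule_a x) (pr_nonneg q hq _ _)
    · exact le_antisymm (e ▸ hule_b x) (pr_nonneg q hq _ _)

lemma cmi_nonneg [Fintype α] [Fintype β] [Fintype γ] (p : Ω → ℝ) (hp : ∀ ω, 0 ≤ p ω)
    (A : Ω → α) (B : Ω → β) (W : Ω → γ) : 0 ≤ cmi p A B W := by
  unfold cmi
  refine Finset.sum_nonneg fun w _ => ?_
  by_cases hw : pr p W w = 0
  · simp [hw]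
  · exact mul_nonneg (pr_nonneg p hp W w)
      (mi_nonneg (condp p W w) (condp_nonneg p hp W w) (sum_condp p W w hw) A B)

end Aux

lemma inj2 {σ τ : Type*} : Function.Injective (fun q : σ × τ => (q.2, q.1)) := by
    rintro ⟨a, b⟩ ⟨c, d⟩ hq
    simp only [Prod.mk.injEq] at hq ⊢; tauto

lemma inj3 {σ τ υ : Type*} : Function.Injective (fun q : σ × τ × υ => (q.2.2, q.1, q.2.1)) := by
    rintro ⟨a, b, c⟩ ⟨d, e, f⟩ hq
    simp only [Prod.mk.injEq] at hq ⊢; tauto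

lemma inj3' {σ τ υ : Type*} : Function.Injective (fun q : σ × τ × υ => ((q.1, q.2.1), q.2.2)) := by
    rintro ⟨a, b, c⟩ ⟨d, e, f⟩ hq
    simp only [Prod.mk.injEq] at hq ⊢; tauto

lemma inj3'' {σ τ υ : Type*} : Function.Injective (fun q : σ × τ × υ => ((q.1, q.2.2), q.2.1)) := by
    rintro ⟨a, b, c⟩ ⟨d, e, f⟩ hq
    simp only [Prod.mk.injEq] at hq ⊢; tauto

lemma inj3''' {σ τ υ : Type*} : Function.Injective (fun q : σ × τ × υ => ((q.2.1, q.2.2), q.1)) := by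
    rintro ⟨a, b, c⟩ ⟨d, e, f⟩ hq
    simp only [Prod.mk.injEq] at hq ⊢; tauto

lemma inj4 {σ τ υ ρ : Type*} :
    Function.Injective (fun q : σ × τ × υ × ρ => ((q.2.2.1, q.2.2.2), q.1, q.2.1)) := by
  rintro ⟨a, b, c, d⟩ ⟨e, f, g, k⟩ hq
  simp only [Prod.mk.injEq] at hq ⊢; tauto

lemma inj4' {σ τ υ ρ : Type*} :
    Function.Injective (fun q : σ × τ × υ × ρ => ((q.1, q.2.1), q.2.2.1, q.2.2.2)) := by
  rintro ⟨a, b, c, d⟩ ⟨e, f, g, k⟩ hq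
  simp only [Prod.mk.injEq] at hq ⊢; tauto


/-- If `I(Y; Z | (X,X')) = 0` then
`I(Y;Z) ≥ I(Y;(X,X')) - I(X;X'|Z) - I(X;Y|X') - I(X';Y|X)`. -/
theorem mi_lower_bound
    {Ω 𝒳 𝒳' 𝒴 𝒵 : Type*} [Fintype Ω] [Fintype 𝒳] [Fintype 𝒳'] [Fintype 𝒴] [Fintype 𝒵]
    [Nonempty 𝒳] [Nonempty 𝒳'] [Nonempty 𝒴] [Nonempty 𝒵]
    (p : Ω → ℝ) (hp : ∀ ω, 0 ≤ p ω) (hsum : ∑ ω, p ω = 1)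
    (X : Ω → 𝒳) (X' : Ω → 𝒳') (Y : Ω → 𝒴) (Z : Ω → 𝒵)
    (h : cmi p Y Z (fun ω => (X ω, X' ω)) = 0) :
    mi p Y Z ≥
      mi p Y (fun ω => (X ω, X' ω)) - cmi p X X' Z - cmi p X Y X' - cmi p X' Y X := by
  have m1 : mi p Y Z = ent p Y + ent p Z - ent p (fun ω => (Y ω, Z ω)) := rfl
  have m2 : mi p Y (fun ω => (X ω, X' ω))
      = ent p Y + ent p (fun ω => (X ω, X' ω)) - ent p (fun ω => (Y ω, X ω, X' ω)) := rfl
  have c1 : cmi p X X' Z = ent p (fun ω => (X ω, Z ω)) + ent p (fun ω => (X' ω, Z ω))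
      - ent p (fun ω => ((X ω, X' ω), Z ω)) - ent p Z := cmi_eq p hp X X' Z
  have c2 : cmi p X Y X' = ent p (fun ω => (X ω, X' ω)) + ent p (fun ω => (Y ω, X' ω))
      - ent p (fun ω => ((X ω, Y ω), X' ω)) - ent p X' := cmi_eq p hp X Y X'
  have c3 : cmi p X' Y X = ent p (fun ω => (X' ω, X ω)) + ent p (fun ω => (Y ω, X ω))
      - ent p (fun ω => ((X' ω, Y ω), X ω)) - ent p X := cmi_eq p hp X' Y X
  have hh : (0:ℝ) = ent p (fun ω => (Y ω, X ω, X' ω)) + ent p (fun ω => (Z ω, X ω, X' ω))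
      - ent p (fun ω => ((Y ω, Z ω), X ω, X' ω)) - ent p (fun ω => (X ω, X' ω)) :=
    h ▸ cmi_eq p hp Y Z (fun ω => (X ω, X' ω))
  have n1 : (0:ℝ) ≤ ent p (fun ω => (X ω, Y ω, Z ω)) + ent p (fun ω => (X' ω, Y ω, Z ω))
      - ent p (fun ω => ((X ω, X' ω), Y ω, Z ω)) - ent p (fun ω => (Y ω, Z ω)) :=
    cmi_eq p hp X X' (fun ω => (Y ω, Z ω)) ▸ cmi_nonneg p hp X X' (fun ω => (Y ω, Z ω))
  have n2 : (0:ℝ) ≤ ent p (fun ω => (Y ω, X ω)) + ent p (fun ω => (Z ω, X ω))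
      - ent p (fun ω => ((Y ω, Z ω), X ω)) - ent p X :=
    cmi_eq p hp Y Z X ▸ cmi_nonneg p hp Y Z X
  have n3 : (0:ℝ) ≤ ent p (fun ω => (Y ω, X' ω)) + ent p (fun ω => (Z ω, X' ω))
      - ent p (fun ω => ((Y ω, Z ω), X' ω)) - ent p X' :=
    cmi_eq p hp Y Z X' ▸ cmi_nonneg p hp Y Z X'
  have r1 : ent p (fun ω => (Y ω, X ω, X' ω)) = ent p (fun ω => (X ω, X' ω, Y ω)) :=
    ent_comp p (fun ω => (X ω, X' ω, Y ω)) (fun q : 𝒳 × 𝒳' × 𝒴 => (q.2.2, q.1, q.2.1)) inj3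
  have r2 : ent p (fun ω => (Z ω, X ω, X' ω)) = ent p (fun ω => (X ω, X' ω, Z ω)) :=
    ent_comp p (fun ω => (X ω, X' ω, Z ω)) (fun q : 𝒳 × 𝒳' × 𝒵 => (q.2.2, q.1, q.2.1)) inj3
  have r3 : ent p (fun ω => ((Y ω, Z ω), X ω, X' ω)) = ent p (fun ω => (X ω, X' ω, Y ω, Z ω)) :=
    ent_comp p (fun ω => (X ω, X' ω, Y ω, Z ω)) (fun q : 𝒳 × 𝒳' × 𝒴 × 𝒵 => ((q.2.2.1, q.2.2.2), q.1, q.2.1)) inj4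
  have r4 : ent p (fun ω => ((X ω, X' ω), Z ω)) = ent p (fun ω => (X ω, X' ω, Z ω)) :=
    ent_comp p (fun ω => (X ω, X' ω, Z ω)) (fun q : 𝒳 × 𝒳' × 𝒵 => ((q.1, q.2.1), q.2.2)) inj3'
  have r5 : ent p (fun ω => (Y ω, X' ω)) = ent p (fun ω => (X' ω, Y ω)) :=
    ent_comp p (fun ω => (X' ω, Y ω)) (fun q : 𝒳' × 𝒴 => (q.2, q.1)) inj2
  have r6 : ent p (fun ω => ((X ω, Y ω), X' ω)) = ent p (fun ω => (X ω, X' ω, Y ω)) :=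
    ent_comp p (fun ω => (X ω, X' ω, Y ω)) (fun q : 𝒳 × 𝒳' × 𝒴 => ((q.1, q.2.2), q.2.1)) inj3''
  have r7 : ent p (fun ω => (X' ω, X ω)) = ent p (fun ω => (X ω, X' ω)) :=
    ent_comp p (fun ω => (X ω, X' ω)) (fun q : 𝒳 × 𝒳' => (q.2, q.1)) inj2
  have r8 : ent p (fun ω => (Y ω, X ω)) = ent p (fun ω => (X ω, Y ω)) :=
    ent_comp p (fun ω => (X ω, Y ω)) (fun q : 𝒳 × 𝒴 => (q.2, q.1)) inj2
  have r9 : ent p (fun ω => ((X' ω, Y ω), X ω)) = ent p (fun ω => (X ω, X' ω, Y ω)) :=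
    ent_comp p (fun ω => (X ω, X' ω, Y ω)) (fun q : 𝒳 × 𝒳' × 𝒴 => ((q.2.1, q.2.2), q.1)) inj3'''
  have r10 : ent p (fun ω => ((X ω, X' ω), Y ω, Z ω)) = ent p (fun ω => (X ω, X' ω, Y ω, Z ω)) :=
    ent_comp p (fun ω => (X ω, X' ω, Y ω, Z ω)) (fun q : 𝒳 × 𝒳' × 𝒴 × 𝒵 => ((q.1, q.2.1), q.2.2.1, q.2.2.2)) inj4'
  have r11 : ent p (fun ω => ((Y ω, Z ω), X ω)) = ent p (fun ω => (X ω, Y ω, Z ω)) :=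
    ent_comp p (fun ω => (X ω, Y ω, Z ω)) (fun q : 𝒳 × 𝒴 × 𝒵 => ((q.2.1, q.2.2), q.1)) inj3'''
  have r12 : ent p (fun ω => ((Y ω, Z ω), X' ω)) = ent p (fun ω => (X' ω, Y ω, Z ω)) :=
    ent_comp p (fun ω => (X' ω, Y ω, Z ω)) (fun q : 𝒳' × 𝒴 × 𝒵 => ((q.2.1, q.2.2), q.1)) inj3'''
  have r13 : ent p (fun ω => (Z ω, X ω)) = ent p (fun ω => (X ω, Z ω)) :=
    ent_comp p (fun ω => (X ω, Z ω)) (fun q : 𝒳 × 𝒵 => (q.2, q.1)) inj2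
  have r14 : ent p (fun ω => (Z ω, X' ω)) = ent p (fun ω => (X' ω, Z ω)) :=
    ent_comp p (fun ω => (X' ω, Z ω)) (fun q : 𝒳' × 𝒵 => (q.2, q.1)) inj2
  linarith [m1, m2, c1, c2, c3, hh, n1, n2, n3, r1, r2, r3, r4, r5, r6, r7, r8, r9,
    r10, r11, r12, r13, r14]
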